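/- arXiv:1404.6751 — 2 statements merged into one kernel-verified Lean document; each statement's English description precedes it below -/
import Mathlib

section
/- Let z = (x,s) and z' = (y,t) be elements of the Heisenberg group ℍ (over a complex Hilbert space) with δ ∈ (0, 10⁻¹⁰⁰), such that N(z) = 1, N(z') ∈ [(1−δ)², (1+δ)²], and d(z,z') ∈ [2(1−δ)², 2(1+δ)²]. Then the exterior angle θ between x and y satisfies |θ| ≤ 400·δ^{1/2}, and NH(z)/N(z) ≤ 20·δ^{1/4} and NH(z')/N(z') ≤ 20·δ^{1/4}. -/
variable {H : Type*} [NormedAddCommGroup H] [InnerProductSpace ℂ H]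

/-- The canonical symplectic form `ω(x,y) = Im ⟪x, y⟫` on a complex Hilbert space. -/
noncomputable def symp (x y : H) : ℝ := (inner ℂ x y : ℂ).im

/-- Group product of the Heisenberg group `H × ℝ`. -/
noncomputable def Hmul (a b : H × ℝ) : H × ℝ :=
  (a.1 + b.1, a.2 + b.2 + symp a.1 b.1 / 2)

/-- Group inverse. -/
noncomputable def Hinv (a : H × ℝ) : H × ℝ := (-a.1, -a.2)

/-- The Koranyi norm. -/
noncomputable def KN (a : H × ℝ) : ℝ := (‖a.1‖ ^ 4 + a.2 ^ 2) ^ ((1 : ℝ) / 4)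

/-- The Koranyi metric. -/
noncomputable def Kd (g h : H × ℝ) : ℝ := KN (Hmul (Hinv g) h)

/-- Non-horizontality `NH(x,t) = |t|^(1/2)`. -/
noncomputable def NH (a : H × ℝ) : ℝ := |a.2| ^ ((1 : ℝ) / 2)

/-!
Write `z = (x, s)`, `z' = (y, t)` and `F = ‖x‖‖y‖ + Re⟪x, y⟫ ≥ 0`. The Koranyi metric obeys the
quantitative triangle inequality
`d(z, z')⁴ + 4s² + 4t² + F (‖x‖ + ‖y‖)² ≤ 8 (N(z)⁴ + N(z')⁴)`,
which comes from `‖y - x‖² = (‖x‖ + ‖y‖)² - 2F`, `(a + b)⁴ ≤ 8 (a⁴ + b⁴)` and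
`ω(x, y)² ≤ (‖x‖‖y‖ - Re⟪x, y⟫) F`. Under the hypotheses its left side is at least `16 - O(δ)`
and its right side at most `16 + O(δ)`, so `s²`, `t²` and `F` are `O(δ)`. Finally `F = O(δ)` makes
the exterior angle `O(√δ)`, since `1 - cos θ ≥ 2θ²/π²` on `[0, π]`.
-/

open Real

lemma quartic_triangle_defect {A B C p ω s t : ℝ} (hA : 0 ≤ A) (hB : 0 ≤ B)
    (hC : C ^ 2 = A ^ 2 + B ^ 2 - 2 * p) (hpω : p ^ 2 + ω ^ 2 ≤ A ^ 2 * B ^ 2) :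
    C ^ 4 + (t - s - ω / 2) ^ 2 + 4 * s ^ 2 + 4 * t ^ 2 + (A * B + p) * (A + B) ^ 2 ≤
      8 * (A ^ 4 + s ^ 2) + 8 * (B ^ 4 + t ^ 2) := by
  have hAB : 0 ≤ A * B := mul_nonneg hA hB
  have hp : |p| ≤ A * B := abs_le_of_sq_le_sq (by nlinarith [sq_nonneg ω]) hAB
  obtain ⟨hp₁, hp₂⟩ := abs_le.mp hp
  have hF : 0 ≤ (A * B + p) * (A + B) ^ 2 := mul_nonneg (by linarith) (sq_nonneg _)
  have hω : ω ^ 2 ≤ (A * B + p) * (A + B) ^ 2 / 2 := by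
    have : A * B - p ≤ (A + B) ^ 2 / 2 := by nlinarith [sq_nonneg (A - B)]
    nlinarith [mul_le_mul_of_nonneg_left this (by linarith : 0 ≤ A * B + p)]
  have hC4 : C ^ 4 ≤ (A + B) ^ 4 - 2 * (A * B + p) * (A + B) ^ 2 := by
    have hC4' : C ^ 4 = (A + B) ^ 4 - 2 * (A * B + p) * (A + B) ^ 2 - 2 * (A * B + p) * C ^ 2 := by
      rw [show C ^ 4 = (C ^ 2) ^ 2 by ring, hC]; ring
    nlinarith [mul_nonneg (by linarith : 0 ≤ A * B + p) (sq_nonneg C)]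
  have hS4 : (A + B) ^ 4 ≤ 8 * (A ^ 4 + B ^ 4) := by
    have hpos : 0 ≤ 7 * A ^ 2 + 10 * A * B + 7 * B ^ 2 := by positivity
    nlinarith [mul_nonneg (sq_nonneg (A - B)) hpos]
  have hu : (t - s - ω / 2) ^ 2 ≤ 4 * s ^ 2 + 4 * t ^ 2 + ω ^ 2 / 2 := by
    nlinarith [sq_nonneg (t - s + ω / 2), sq_nonneg (t + s)]
  linarith

lemma eight_add_eight_mul_one_add_pow_sub_le {δ : ℝ} (hδ₀ : 0 ≤ δ) (hδ₁ : δ ≤ 1 / 1000) :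
    8 + 8 * (1 + δ) ^ 8 - 16 * (1 - δ) ^ 8 ≤ 248 * δ := by
  nlinarith [pow_nonneg hδ₀ 2, pow_nonneg hδ₀ 3, pow_nonneg hδ₀ 4, pow_nonneg hδ₀ 5,
    pow_nonneg hδ₀ 6, pow_nonneg hδ₀ 7, pow_nonneg hδ₀ 8,
    mul_nonneg (pow_nonneg hδ₀ 2) (sub_nonneg.2 hδ₁)]

lemma Real.arccos_le_pi_mul_sqrt {x : ℝ} (h₁ : -1 ≤ x) (h₂ : x ≤ 1) :
    arccos x ≤ π * √((1 - x) / 2) := by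
  have hθ : 0 ≤ arccos x := arccos_nonneg x
  have hcos := cos_le_one_sub_mul_cos_sq (x := arccos x)
    (by rw [abs_of_nonneg hθ]; exact arccos_le_pi x)
  rw [cos_arccos h₁ h₂] at hcos
  rw [← sqrt_sq pi_pos.le, ← sqrt_mul (sq_nonneg _)]
  refine (le_sqrt hθ (by nlinarith [pi_pos])).mpr ?_
  have hπ : 0 < π ^ 2 := by positivity
  rw [div_mul_eq_mul_div, le_sub_iff_add_le, ← le_sub_iff_add_le', div_le_iff₀ hπ] at hcos
  nlinarith

lemma KN_nonneg {E : Type*} [NormedAddCommGroup E] (a : E × ℝ) : 0 ≤ KN a := by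
  unfold KN; positivity

lemma KN_pow_four {E : Type*} [NormedAddCommGroup E] (a : E × ℝ) :
    KN a ^ 4 = ‖a.1‖ ^ 4 + a.2 ^ 2 := by
  rw [KN, show (1 : ℝ) / 4 = ((4 : ℕ) : ℝ)⁻¹ by norm_num,
    rpow_inv_natCast_pow (by positivity) (by norm_num)]

lemma NH_le_of_sq_le {E : Type*} {a : E × ℝ} {c δ : ℝ} (hc : 0 ≤ c) (hδ : 0 ≤ δ)
    (h : a.2 ^ 2 ≤ c ^ 4 * δ) : NH a ≤ c * δ ^ ((1 : ℝ) / 4) := by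
  have hNH : NH a ^ 4 = a.2 ^ 2 := by
    rw [NH, show (4 : ℕ) = 2 * 2 from rfl, pow_mul, show (1 : ℝ) / 2 = ((2 : ℕ) : ℝ)⁻¹ by norm_num,
      rpow_inv_natCast_pow (abs_nonneg _) (by norm_num), sq_abs]
  have hδ4 : (δ ^ ((1 : ℝ) / 4)) ^ 4 = δ := by
    rw [show (1 : ℝ) / 4 = ((4 : ℕ) : ℝ)⁻¹ by norm_num, rpow_inv_natCast_pow hδ (by norm_num)]
  refine (pow_le_pow_iff_left₀ (by unfold NH; positivity) (by positivity) four_ne_zero).mp ?_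
  rwa [hNH, mul_pow, hδ4]

lemma Hmul_Hinv (z z' : H × ℝ) :
    Hmul (Hinv z) z' = (z'.1 - z.1, z'.2 - z.2 - symp z.1 z'.1 / 2) := by
  simp only [Hmul, Hinv, symp, inner_neg_left, Complex.neg_im]
  exact Prod.ext (neg_add_eq_sub _ _) (by ring)

lemma re_sq_add_im_sq_inner_le (x y : H) :
    (inner ℂ x y : ℂ).re ^ 2 + (inner ℂ x y : ℂ).im ^ 2 ≤ ‖x‖ ^ 2 * ‖y‖ ^ 2 := by
  calc (inner ℂ x y : ℂ).re ^ 2 + (inner ℂ x y : ℂ).im ^ 2 = ‖(inner ℂ x y : ℂ)‖ ^ 2 := by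
        rw [Complex.sq_norm, Complex.normSq_apply]; ring
    _ ≤ (‖x‖ * ‖y‖) ^ 2 := pow_le_pow_left₀ (norm_nonneg _) (norm_inner_le_norm x y) 2
    _ = ‖x‖ ^ 2 * ‖y‖ ^ 2 := mul_pow _ _ _

lemma arccos_neg_re_inner_div_le_pi_mul_sqrt {x y : H} (hxy : 0 < ‖x‖ * ‖y‖) :
    arccos (-(inner ℂ x y : ℂ).re / (‖x‖ * ‖y‖)) ≤
      π * √((‖x‖ * ‖y‖ + (inner ℂ x y : ℂ).re) / (2 * (‖x‖ * ‖y‖))) := by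
  have hre := abs_le.mp ((Complex.abs_re_le_norm _).trans (norm_inner_le_norm (𝕜 := ℂ) x y))
  have h₁ : -1 ≤ -(inner ℂ x y : ℂ).re / (‖x‖ * ‖y‖) := by
    rw [le_div_iff₀ hxy]; linarith
  have h₂ : -(inner ℂ x y : ℂ).re / (‖x‖ * ‖y‖) ≤ 1 := by
    rw [div_le_iff₀ hxy]; linarith
  convert arccos_le_pi_mul_sqrt h₁ h₂ using 3
  generalize ‖x‖ * ‖y‖ = r at hxy ⊢
  field_simp
  ring

lemma Kd_pow_four_add_defect_le (z z' : H × ℝ) :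
    Kd z z' ^ 4 + 4 * z.2 ^ 2 + 4 * z'.2 ^ 2 +
        (‖z.1‖ * ‖z'.1‖ + (inner ℂ z.1 z'.1 : ℂ).re) * (‖z.1‖ + ‖z'.1‖) ^ 2 ≤
      8 * (KN z ^ 4 + KN z' ^ 4) := by
  rw [Kd, KN_pow_four, KN_pow_four, KN_pow_four, Hmul_Hinv]
  have hC : ‖z'.1 - z.1‖ ^ 2 = ‖z.1‖ ^ 2 + ‖z'.1‖ ^ 2 - 2 * (inner ℂ z.1 z'.1 : ℂ).re := by
    rw [norm_sub_rev, norm_sub_sq (𝕜 := ℂ), RCLike.re_to_complex]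
    ring
  have := quartic_triangle_defect (s := z.2) (t := z'.2) (norm_nonneg z.1) (norm_nonneg z'.1) hC
    (re_sq_add_im_sq_inner_le z.1 z'.1)
  dsimp only [symp]
  linarith

lemma defect_le_of_near_extremal {δ : ℝ} {z z' : H × ℝ} (hδ₀ : 0 ≤ δ) (hδ₁ : δ ≤ 1 / 1000)
    (hz : KN z = 1) (hz' : KN z' ≤ (1 + δ) ^ 2) (hd : 2 * (1 - δ) ^ 2 ≤ Kd z z') :
    4 * z.2 ^ 2 + 4 * z'.2 ^ 2 +
        (‖z.1‖ * ‖z'.1‖ + (inner ℂ z.1 z'.1 : ℂ).re) * (‖z.1‖ + ‖z'.1‖) ^ 2 ≤ 248 * δ := by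
  have hdefect := Kd_pow_four_add_defect_le z z'
  have hz'4 : KN z' ^ 4 ≤ ((1 + δ) ^ 2) ^ 4 := pow_le_pow_left₀ (KN_nonneg z') hz' 4
  have hd4 : (2 * (1 - δ) ^ 2) ^ 4 ≤ Kd z z' ^ 4 := pow_le_pow_left₀ (by positivity) hd 4
  rw [hz] at hdefect
  nlinarith [eight_add_eight_mul_one_add_pow_sub_le hδ₀ hδ₁]

lemma bounds_of_near_extremal {δ : ℝ} {z z' : H × ℝ} (hδ₀ : 0 ≤ δ) (hδ₁ : δ ≤ 1 / 1000)
    (hz : KN z = 1) (hz' : KN z' ∈ Set.Icc ((1 - δ) ^ 2) ((1 + δ) ^ 2))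
    (hd : 2 * (1 - δ) ^ 2 ≤ Kd z z') :
    z.2 ^ 2 ≤ 62 * δ ∧ z'.2 ^ 2 ≤ 62 * δ ∧ 9 / 10 ≤ KN z' ∧ 1 / 2 ≤ ‖z.1‖ * ‖z'.1‖ ∧
      ‖z.1‖ * ‖z'.1‖ + (inner ℂ z.1 z'.1 : ℂ).re ≤ 124 * δ := by
  have hdefect := defect_le_of_near_extremal hδ₀ hδ₁ hz hz'.2 hd
  set A := ‖z.1‖
  set B := ‖z'.1‖
  set p := (inner ℂ z.1 z'.1 : ℂ).re
  have hF : 0 ≤ A * B + p := by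
    linarith [abs_le.mp ((Complex.abs_re_le_norm _).trans (norm_inner_le_norm (𝕜 := ℂ) z.1 z'.1))]
  have hFS := mul_nonneg hF (sq_nonneg (A + B))
  have hs : z.2 ^ 2 ≤ 62 * δ := by nlinarith [sq_nonneg z'.2]
  have ht : z'.2 ^ 2 ≤ 62 * δ := by nlinarith [sq_nonneg z.2]
  have hK' : 9 / 10 ≤ KN z' := by nlinarith [hz'.1]
  have hA : 1 / 2 ≤ A ^ 4 := by
    have hz4 := KN_pow_four z
    rw [hz, one_pow] at hz4
    linarith
  have hB : 1 / 2 ≤ B ^ 4 := by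
    nlinarith [KN_pow_four z', pow_le_pow_left₀ (by norm_num) hK' 4]
  have hAB : 1 / 2 ≤ A * B := by
    refine (pow_le_pow_iff_left₀ (by norm_num) (by positivity) four_ne_zero).mp ?_
    nlinarith [mul_pow A B 4]
  refine ⟨hs, ht, hK', hAB, ?_⟩
  nlinarith [sq_nonneg (A - B)]

/-- the small-angle lemma.  The exterior angle between `x` and `y`
is `θ = arccos (-Re ⟪x,y⟫ / (‖x‖ * ‖y‖))`. -/
theorem stmt_11 (δ : ℝ) (hδ : δ ∈ Set.Ioo (0:ℝ) (10 ^ (-(100:ℤ)) : ℝ))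
    (z z' : H × ℝ) (hz : KN z = 1)
    (hz' : KN z' ∈ Set.Icc ((1 - δ) ^ 2) ((1 + δ) ^ 2))
    (hd : Kd z z' ∈ Set.Icc (2 * (1 - δ) ^ 2) (2 * (1 + δ) ^ 2)) :
    |Real.arccos (-(inner ℂ z.1 z'.1 : ℂ).re / (‖z.1‖ * ‖z'.1‖))| ≤ 400 * δ ^ ((1:ℝ)/2) ∧
    NH z / KN z ≤ 20 * δ ^ ((1:ℝ)/4) ∧
    NH z' / KN z' ≤ 20 * δ ^ ((1:ℝ)/4) := by
  obtain ⟨hδ₀, hδ₁⟩ := hδ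
  replace hδ₁ : δ ≤ 1 / 1000 := hδ₁.le.trans (by norm_num)
  obtain ⟨hs, ht, hK', hAB, hF⟩ := bounds_of_near_extremal hδ₀.le hδ₁ hz hz' hd.1
  refine ⟨?_, ?_, ?_⟩
  · have hsqrt : √((‖z.1‖ * ‖z'.1‖ + (inner ℂ z.1 z'.1 : ℂ).re) / (2 * (‖z.1‖ * ‖z'.1‖))) ≤
        12 * √δ := by
      rw [sqrt_le_left (by positivity), mul_pow, sq_sqrt hδ₀.le, div_le_iff₀ (by positivity)]
      nlinarith
    rw [abs_of_nonneg (arccos_nonneg _), ← sqrt_eq_rpow]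
    calc _ ≤ π * √((‖z.1‖ * ‖z'.1‖ + (inner ℂ z.1 z'.1 : ℂ).re) / (2 * (‖z.1‖ * ‖z'.1‖))) :=
          arccos_neg_re_inner_div_le_pi_mul_sqrt (by linarith)
      _ ≤ 4 * (12 * √δ) := by gcongr; exact pi_lt_four.le
      _ ≤ 400 * √δ := by linarith [sqrt_nonneg δ]
  · rw [hz, div_one]
    exact NH_le_of_sq_le (by norm_num) hδ₀.le (by linarith)
  · have hNH := NH_le_of_sq_le (c := 10) (a := z') (by norm_num) hδ₀.le (by linarith)
    rw [div_le_iff₀ (by linarith)]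
    nlinarith [rpow_nonneg hδ₀.le ((1 : ℝ) / 4)]
end

section
/- There exists ℓ₀ > 0 such that for all ℓ ≥ ℓ₀, if z₁,…,z_N are vectors in a complex Hilbert space with N ≥ 2^{ℓ/2}/(16 log ℓ) and ‖z_i‖ ≤ ℓ·(log ℓ)^{1/2} for all i, then there exist indices i ≠ j with |ω(z_i, z_j)| ≤ ℓ²/4, where ω(u,v) = Im⟨ū,v⟩. -/
/-!
If the conclusion fails, rescaling by `R = l (log l)^{1/2}` gives vectors `vᵢ` in the unit ball
with `|ω(vᵢ, vⱼ)| ≥ 1 / k` for `i ≠ j`, where `k = ⌈4 log l⌉`. Such a family is small. Project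
all vectors onto the orthogonal complement of one of them, `u`: since `|⟪u, vᵢ⟫| ≥ |ω(u, vᵢ)|`
is bounded below, every squared norm drops by a fixed amount, and after pigeonholing the values
`⟪u, vᵢ⟫` into small squares of the unit disc, the symplectic values within one square change
only slightly. After `4k²` rounds the norms would vanish, so the family has at most
`2 ^ O(k³) = 2 ^ O(log³ l)` members, far fewer than `2 ^ (l / 2) / (16 log l)`.
-/

variable {H : Type*} [NormedAddCommGroup H] [InnerProductSpace ℂ H]

open Finset
open scoped InnerProductSpace ComplexConjugate

lemma abs_symp_le_of_norm_sq_le {x y : H} {ρ : ℝ} (hx : ‖x‖ ^ 2 ≤ ρ) (hy : ‖y‖ ^ 2 ≤ ρ) :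
    |symp x y| ≤ ρ := by
  have h := (Complex.abs_im_le_norm ⟪x, y⟫_ℂ).trans (norm_inner_le_norm x y)
  rw [symp]
  nlinarith [sq_nonneg (‖x‖ - ‖y‖)]

lemma symp_ofReal_smul (r : ℝ) (x y : H) :
    symp ((r : ℂ) • x) ((r : ℂ) • y) = r ^ 2 * symp x y := by
  simp only [symp, inner_smul_left, inner_smul_right, Complex.conj_ofReal, ← mul_assoc,
    ← Complex.ofReal_mul, Complex.im_ofReal_mul, sq]

lemma inner_sub_inner_smul_sub_inner_smul {e : H} (he : ‖e‖ = 1) (x y : H) :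
    ⟪x - ⟪e, x⟫_ℂ • e, y - ⟪e, y⟫_ℂ • e⟫_ℂ = ⟪x, y⟫_ℂ - conj ⟪e, x⟫_ℂ * ⟪e, y⟫_ℂ := by
  have hee : ⟪e, e⟫_ℂ = 1 := by simp [inner_self_eq_norm_sq_to_K, he]
  have hxe : ⟪x, e⟫_ℂ = conj ⟪e, x⟫_ℂ := (inner_conj_symm x e).symm
  simp only [inner_sub_left, inner_sub_right, inner_smul_left, inner_smul_right, hee, hxe]
  ring

lemma norm_sq_sub_inner_smul {e : H} (he : ‖e‖ = 1) (x : H) :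
    ‖x - ⟪e, x⟫_ℂ • e‖ ^ 2 = ‖x‖ ^ 2 - ‖⟪e, x⟫_ℂ‖ ^ 2 := by
  have h := congrArg Complex.re (inner_sub_inner_smul_sub_inner_smul he x x)
  rw [Complex.conj_mul'] at h
  simpa [inner_self_eq_norm_sq_to_K, ← Complex.ofReal_pow] using h

lemma abs_symp_sub_inner_smul_sub_symp_le {e x : H} (he : ‖e‖ = 1) (hx : ‖x‖ ≤ 1) (y : H) :
    |symp (x - ⟪e, x⟫_ℂ • e) (y - ⟪e, y⟫_ℂ • e) - symp x y| ≤ ‖⟪e, y⟫_ℂ - ⟪e, x⟫_ℂ‖ := by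
  set a := ⟪e, x⟫_ℂ
  set b := ⟪e, y⟫_ℂ
  have ha : ‖a‖ ≤ 1 := (norm_inner_le_norm e x).trans (by rw [he, one_mul]; exact hx)
  -- `conj a * a` is real, so only `conj a * (b - a)` contributes to the imaginary part
  have hsplit : (conj a * b).im = (conj a * (b - a)).im := by
    simp [mul_sub, Complex.conj_mul', ← Complex.ofReal_pow]
  calc |symp (x - a • e) (y - b • e) - symp x y| = |(conj a * (b - a)).im| := by
        rw [symp, symp, inner_sub_inner_smul_sub_inner_smul he, Complex.sub_im, hsplit,
          sub_sub_cancel_left, abs_neg]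
    _ ≤ ‖a‖ * ‖b - a‖ := by
        simpa using Complex.abs_im_le_norm (conj a * (b - a))
    _ ≤ ‖b - a‖ := mul_le_of_le_one_left (norm_nonneg _) ha

lemma le_norm_inner_inv_norm_smul {u x : H} {δ : ℝ} (hu : ‖u‖ ≤ 1) (h : δ ≤ |symp u x|) :
    δ ≤ ‖⟪(‖u‖ : ℂ)⁻¹ • u, x⟫_ℂ‖ := by
  rw [inner_smul_left, norm_mul, Complex.norm_conj, norm_inv, Complex.norm_real, norm_norm]
  have hsx : |symp u x| ≤ ‖⟪u, x⟫_ℂ‖ := Complex.abs_im_le_norm _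
  rcases (norm_nonneg u).eq_or_lt with hu0 | hu0
  · simpa [norm_eq_zero.1 hu0.symm, symp] using h
  · calc δ ≤ ‖⟪u, x⟫_ℂ‖ := h.trans hsx
      _ ≤ ‖u‖⁻¹ * ‖⟪u, x⟫_ℂ‖ := le_mul_of_one_le_left (norm_nonneg _) (one_le_inv₀ hu0 |>.2 hu)

section Grid

variable {m : ℕ}

lemma floor_mul_mem_Icc {x : ℝ} (hx : |x| ≤ 1) : ⌊m * x⌋ ∈ Icc (-(m : ℤ)) m := by
  obtain ⟨hx₁, hx₂⟩ := abs_le.1 hx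
  have hm : (0 : ℝ) ≤ m := m.cast_nonneg
  rw [mem_Icc, Int.le_floor, Int.floor_le_iff]
  push_cast
  constructor <;> nlinarith

lemma abs_sub_lt_of_floor_mul_eq (hm : 0 < m) {x y : ℝ} (h : ⌊m * x⌋ = ⌊m * y⌋) :
    |x - y| < 1 / m := by
  have hm' : (0 : ℝ) < m := Nat.cast_pos.2 hm
  have := Int.abs_sub_lt_one_of_floor_eq_floor h
  rw [← mul_sub, abs_mul, abs_of_pos hm'] at this
  rwa [lt_div_iff₀ hm', mul_comm]

/-- Pigeonhole over the `(2m+1)²` squares of side `1/m` covering the unit disc. -/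
lemma exists_lt_card_subset_norm_sub_le {ι : Type*} {s : Finset ι} (g : ι → ℂ)
    (hg : ∀ i ∈ s, ‖g i‖ ≤ 1) (hm : 0 < m) {c : ℕ} (hc : (2 * m + 1) ^ 2 * c < s.card) :
    ∃ t ⊆ s, c < t.card ∧ ∀ b ∈ t, ∀ b' ∈ t, ‖g b' - g b‖ ≤ 2 / m := by
  classical
  let cell : ι → ℤ × ℤ := fun i => (⌊m * (g i).re⌋, ⌊m * (g i).im⌋)
  have hcell : ∀ i ∈ s, cell i ∈ Icc (-(m : ℤ)) m ×ˢ Icc (-(m : ℤ)) m := fun i hi =>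
    mem_product.2 ⟨floor_mul_mem_Icc ((Complex.abs_re_le_norm _).trans (hg i hi)),
      floor_mul_mem_Icc ((Complex.abs_im_le_norm _).trans (hg i hi))⟩
  have hcard : (Icc (-(m : ℤ)) m ×ˢ Icc (-(m : ℤ)) m).card = (2 * m + 1) ^ 2 := by
    rw [card_product, Int.card_Icc, sq]
    congr 2 <;> omega
  obtain ⟨y, -, hy⟩ := exists_lt_card_fiber_of_mul_lt_card_of_maps_to hcell (hcard ▸ hc)
  refine ⟨_, filter_subset _ _, hy, fun b hb b' hb' => ?_⟩
  have hbb' : cell b' = cell b := (mem_filter.1 hb').2.trans (mem_filter.1 hb).2.symm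
  have hre := abs_sub_lt_of_floor_mul_eq hm (congrArg Prod.fst hbb')
  have him := abs_sub_lt_of_floor_mul_eq hm (congrArg Prod.snd hbb')
  calc ‖g b' - g b‖ ≤ |(g b' - g b).re| + |(g b' - g b).im| := Complex.norm_le_abs_re_add_abs_im _
    _ ≤ 1 / m + 1 / m := by rw [Complex.sub_re, Complex.sub_im]; linarith
    _ = 2 / m := by ring

end Grid

lemma grid_pow_le_two_pow {k : ℕ} (hk : 0 < k) :
    ((2 * (16 * k ^ 3) + 1) ^ 2 + 1) ^ (4 * k ^ 2) ≤ 2 ^ (68 * k ^ 3) := by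
  have hk3 : 1 ≤ k ^ 3 := Nat.one_le_pow _ _ hk
  have hbase : (2 * (16 * k ^ 3) + 1) ^ 2 + 1 ≤ 2 ^ 11 * k ^ 6 := by nlinarith
  have hk6 : k ^ 6 ≤ 2 ^ (6 * k) := by
    rw [mul_comm, pow_mul]
    exact Nat.pow_le_pow_left Nat.lt_two_pow_self.le 6
  calc ((2 * (16 * k ^ 3) + 1) ^ 2 + 1) ^ (4 * k ^ 2)
      ≤ (2 ^ (17 * k)) ^ (4 * k ^ 2) := by
        refine Nat.pow_le_pow_left (hbase.trans ?_) _
        calc 2 ^ 11 * k ^ 6 ≤ 2 ^ 11 * 2 ^ (6 * k) := Nat.mul_le_mul_left _ hk6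
          _ = 2 ^ (11 + 6 * k) := by rw [pow_add]
          _ ≤ 2 ^ (17 * k) := Nat.pow_le_pow_right two_pos (by omega)
    _ = 2 ^ (68 * k ^ 3) := by rw [← pow_mul]; ring_nf

section Packing

variable {ι : Type*} [DecidableEq ι] {s : Finset ι} {m : ℕ}

/-- Project out the unit vector `e` along `v i₀` and keep a cluster of the other indices on which
`⟪e, v i⟫` varies by at most `2 / m`. -/
lemma exists_subset_of_pairwise_le_abs_symp {v : ι → H} {ρ δ : ℝ} (hρ : ρ ≤ 1) (hδ : 0 < δ)
    (hm : 0 < m) (hv : ∀ i ∈ s, ‖v i‖ ^ 2 ≤ ρ)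
    (hpair : (s : Set ι).Pairwise fun i j => δ ≤ |symp (v i) (v j)|) {i₀ : ι} (hi₀ : i₀ ∈ s)
    {c : ℕ} (hc : (2 * m + 1) ^ 2 * c < (s.erase i₀).card) :
    ∃ t ⊆ s, ∃ w : ι → H, c < t.card ∧ (∀ i ∈ t, ‖w i‖ ^ 2 ≤ ρ - δ ^ 2) ∧
      (t : Set ι).Pairwise fun i j => δ - 2 / m ≤ |symp (w i) (w j)| := by
  have hv1 : ∀ i ∈ s, ‖v i‖ ≤ 1 := fun i hi =>
    (pow_le_one_iff_of_nonneg (norm_nonneg _) two_ne_zero).1 ((hv i hi).trans hρ)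
  have hfar : ∀ i ∈ s.erase i₀, δ ≤ |symp (v i₀) (v i)| := fun i hi =>
    hpair hi₀ (mem_of_mem_erase hi) (ne_of_mem_erase hi).symm
  obtain ⟨j, hj⟩ := card_pos.1 ((Nat.zero_le _).trans_lt hc)
  have hu : v i₀ ≠ 0 := by
    rintro hu
    have := hfar j hj
    simp [hu, symp] at this
    linarith
  set e : H := (‖v i₀‖ : ℂ)⁻¹ • v i₀
  have he : ‖e‖ = 1 := norm_smul_inv_norm hu
  have hδe : ∀ i ∈ s.erase i₀, δ ≤ ‖⟪e, v i⟫_ℂ‖ := fun i hi =>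
    le_norm_inner_inv_norm_smul (hv1 i₀ hi₀) (hfar i hi)
  obtain ⟨t, hts, hct, hclose⟩ := exists_lt_card_subset_norm_sub_le (fun i => ⟪e, v i⟫_ℂ)
    (fun i hi => (norm_inner_le_norm _ _).trans (by
      rw [he, one_mul]; exact hv1 i (mem_of_mem_erase hi))) hm hc
  refine ⟨t, hts.trans (erase_subset _ _), fun i => v i - ⟪e, v i⟫_ℂ • e, hct, ?_, ?_⟩
  · intro i hi
    rw [norm_sq_sub_inner_smul he]
    have := hδe i (hts hi)
    have := hv i (mem_of_mem_erase (hts hi))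
    nlinarith
  · intro b hb b' hb' hbb'
    have hold := hpair (mem_of_mem_erase (hts hb)) (mem_of_mem_erase (hts hb')) hbb'
    have herr := abs_symp_sub_inner_smul_sub_symp_le he (hv1 b (mem_of_mem_erase (hts hb))) (v b')
    have := abs_sub_abs_le_abs_sub (symp (v b) (v b'))
      (symp (v b - ⟪e, v b⟫_ℂ • e) (v b' - ⟪e, v b'⟫_ℂ • e))
    rw [abs_sub_comm] at this
    linarith [hclose b hb b' hb']

theorem card_le_of_pairwise_le_abs_symp {v : ι → H} {ε : ℝ} (hε : 0 < ε) (hm : 0 < m) (n : ℕ)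
    {ρ δ : ℝ} (hρ : ρ ≤ 1) (hρn : ρ ≤ n * ε ^ 2) (hδ : ε + n * (2 / m) ≤ δ)
    (hv : ∀ i ∈ s, ‖v i‖ ^ 2 ≤ ρ)
    (hpair : (s : Set ι).Pairwise fun i j => δ ≤ |symp (v i) (v j)|) :
    s.card ≤ ((2 * m + 1) ^ 2 + 1) ^ n := by
  induction n generalizing s v ρ δ with
  | zero =>
    rw [pow_zero, card_le_one]
    intro i hi j hj
    by_contra hij
    have := abs_symp_le_of_norm_sq_le (hv i hi) (hv j hj)
    have := hpair hi hj hij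
    simp only [CharP.cast_eq_zero, zero_mul, add_zero] at hρn hδ
    linarith
  | succ n ih =>
    set K := (2 * m + 1) ^ 2
    by_contra! hs
    obtain ⟨i₀, hi₀⟩ := card_pos.1 (Nat.zero_lt_of_lt hs)
    have hδ' : ε ≤ δ := by
      have : (0 : ℝ) ≤ (n + 1 : ℕ) * (2 / m) := by positivity
      linarith
    have hc : K * (K + 1) ^ n < (s.erase i₀).card := by
      have hexp : (K + 1) ^ (n + 1) = K * (K + 1) ^ n + (K + 1) ^ n := by ring
      have := Nat.one_le_pow n (K + 1) (by omega)
      rw [card_erase_of_mem hi₀]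
      omega
    obtain ⟨t, -, w, hct, hw, hwpair⟩ :=
      exists_subset_of_pairwise_le_abs_symp hρ (hε.trans_le hδ') hm hv hpair hi₀ hc
    refine hct.not_ge (ih (ρ := ρ - δ ^ 2) (δ := δ - 2 / m) ?_ ?_ ?_ hw hwpair)
    · nlinarith
    · push_cast at hρn; nlinarith
    · push_cast at hδ; linarith

theorem card_le_two_pow_of_pairwise_le_abs_symp {z : ι → H} {R : ℝ} {k : ℕ} (hk : 0 < k)
    (hR : 0 < R) (hz : ∀ i ∈ s, ‖z i‖ ≤ R)
    (hpair : (s : Set ι).Pairwise fun i j => R ^ 2 / k ≤ |symp (z i) (z j)|) :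
    s.card ≤ 2 ^ (68 * k ^ 3) := by
  set v : ι → H := fun i => ((R⁻¹ : ℝ) : ℂ) • z i
  have hv : ∀ i ∈ s, ‖v i‖ ^ 2 ≤ 1 := fun i hi => by
    refine pow_le_one₀ (norm_nonneg _) ?_
    rw [norm_smul, Complex.norm_real, Real.norm_of_nonneg (by positivity)]
    exact inv_mul_le_one_of_le₀ (hz i hi) hR.le
  have hvpair : (s : Set ι).Pairwise fun i j => (k : ℝ)⁻¹ ≤ |symp (v i) (v j)| :=
    fun i hi j hj hij => by
      change (k : ℝ)⁻¹ ≤ |symp (((R⁻¹ : ℝ) : ℂ) • z i) (((R⁻¹ : ℝ) : ℂ) • z j)|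
      rw [symp_ofReal_smul, abs_mul, abs_of_nonneg (by positivity), inv_pow,
        ← div_eq_inv_mul, le_div_iff₀ (by positivity), ← div_eq_inv_mul]
      exact hpair hi hj hij
  -- `4k²` projection steps on grids of mesh `(16k³)⁻¹`, each removing `(2k)⁻²` of squared norm
  -- and `(8k³)⁻¹` of the symplectic lower bound
  refine (card_le_of_pairwise_le_abs_symp (ε := (2 * k : ℝ)⁻¹) (m := 16 * k ^ 3) (by positivity)
    (by positivity) (4 * k ^ 2) le_rfl ?_ ?_ hv hvpair).trans (grid_pow_le_two_pow hk)
  · push_cast; field_simp; norm_num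
  · push_cast; field_simp; ring_nf; norm_num

end Packing

lemma pow_four_div_le_two_rpow {x : ℝ} (hx : 0 ≤ x) : x ^ 4 / 384 ≤ 2 ^ x := by
  have hexp := Real.pow_div_factorial_le_exp (Real.log 2 * x) (by positivity) 4
  have hlog : 1 / 2 ≤ Real.log 2 := by linarith [Real.log_two_gt_d9]
  rw [Real.rpow_def_of_pos two_pos]
  calc x ^ 4 / 384 = (1 / 2 * x) ^ 4 / 24 := by ring
    _ ≤ (Real.log 2 * x) ^ 4 / 24 := by gcongr
    _ ≤ _ := by simpa [Nat.factorial] using hexp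

lemma two_pow_lt_two_rpow_div {l : ℝ} (hl : 0 < l) (hL : 2 ^ 23 ≤ Real.logb 2 l) {k : ℕ}
    (hk : (k : ℝ) ≤ 5 * Real.logb 2 l) :
    (2 : ℝ) ^ (68 * k ^ 3) < 2 ^ (l / 2) / (16 * Real.logb 2 l) := by
  set L := Real.logb 2 l
  have hL0 : 0 < L := lt_of_lt_of_le (by positivity) hL
  have hL3 : (2 : ℝ) ^ 69 ≤ L ^ 3 := by
    calc (2 : ℝ) ^ 69 = (2 ^ 23) ^ 3 := by norm_num
      _ ≤ L ^ 3 := by gcongr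
  have h2L := pow_four_div_le_two_rpow hL0.le
  have h16 : 16 * L < 2 ^ L := by nlinarith
  have hk3 : ((68 * k ^ 3 : ℕ) : ℝ) ≤ 8500 * L ^ 3 := by
    have : (k : ℝ) ^ 3 ≤ (5 * L) ^ 3 := by gcongr
    push_cast; nlinarith
  have hexp : L + 8500 * L ^ 3 ≤ 2 ^ L / 2 := by nlinarith
  rw [lt_div_iff₀ (by positivity), ← Real.rpow_logb two_pos one_lt_two.ne' hl, mul_comm]
  calc 16 * L * 2 ^ (68 * k ^ 3) < 2 ^ L * (2 : ℝ) ^ ((68 * k ^ 3 : ℕ) : ℝ) := by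
        rw [Real.rpow_natCast]; gcongr
    _ ≤ 2 ^ L * (2 : ℝ) ^ (8500 * L ^ 3) := by gcongr; norm_num
    _ = 2 ^ (L + 8500 * L ^ 3) := (Real.rpow_add two_pos _ _).symm
    _ ≤ 2 ^ ((2 : ℝ) ^ L / 2) := Real.rpow_le_rpow_of_exponent_le one_le_two hexp

/-- many bounded vectors contain a pair with small symplectic value. -/
theorem stmt_12 :
    ∃ l₀ : ℝ, 0 < l₀ ∧ ∀ (H : Type*) [inst : NormedAddCommGroup H]
      [inst2 : InnerProductSpace ℂ H] (l : ℝ), l₀ ≤ l →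
      ∀ (N : ℕ) (z : Fin N → H),
        (2 : ℝ) ^ (l / 2) / (16 * Real.logb 2 l) ≤ (N : ℝ) →
        (∀ i, ‖z i‖ ≤ l * (Real.logb 2 l) ^ ((1:ℝ)/2)) →
        ∃ i j, i ≠ j ∧ |symp (z i) (z j)| ≤ l ^ 2 / 4 := by
  refine ⟨2 ^ (2 ^ 23 : ℝ), by positivity, fun H _ _ l hl N z hN hz => ?_⟩
  by_contra! hfar
  have hl0 : 0 < l := lt_of_lt_of_le (by positivity) hl
  set L := Real.logb 2 l
  have hL : 2 ^ 23 ≤ L := by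
    simpa [Real.logb_rpow] using Real.logb_le_logb_of_le one_lt_two (by positivity) hl
  have hL0 : 0 < L := lt_of_lt_of_le (by positivity) hL
  set k := ⌈4 * L⌉₊
  have hk4 : 4 * L ≤ k := Nat.le_ceil _
  have hk5 : (k : ℝ) ≤ 5 * L := by linarith [Nat.ceil_lt_add_one (by positivity : 0 ≤ 4 * L)]
  have hR : (l * L ^ (1 / 2 : ℝ)) ^ 2 = l ^ 2 * L := by
    rw [mul_pow, ← Real.rpow_natCast (L ^ _), ← Real.rpow_mul hL0.le]; norm_num
  have hcard : N ≤ 2 ^ (68 * k ^ 3) := by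
    simpa using card_le_two_pow_of_pairwise_le_abs_symp (s := univ) (Nat.ceil_pos.2 (by positivity))
      (by positivity) (fun i _ => hz i) fun i _ j _ hij => by
        refine le_trans ?_ (hfar i j hij).le
        rw [hR, div_le_div_iff₀ (by positivity) (by positivity)]
        nlinarith [sq_nonneg l]
  exact (hN.trans (by exact_mod_cast hcard)).not_gt (two_pow_lt_two_rpow_div hl0 hL hk5)
end
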